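/- arXiv:0709.3741 — 3 statements merged into one kernel-verified Lean document; each statement's English description precedes it below -/
import Mathlib

section
/- Let A be a bounded unital complex *-algebra. Then A is C*-representable if and only if rad(A) = {0}. -/
/-!
In a C*-algebra, `b b* + ∑ bᵢ bᵢ* = α • 1` forces `‖b‖² ≤ |α|`. Hence in a bounded `*`-algebra
every element has a norm bound valid in all `*`-representations at once, so the Hilbert sum of
one representation per element outside the radical is again a bounded `*`-representation. Its
kernel is exactly the radical, so a trivial radical makes it injective.
-/

section CommonDefs

variable (A : Type) [Ring A] [Algebra ℂ A] [StarRing A] [StarModule ℂ A]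

/-- `A` is C*-representable: there is an injective `*`-representation of `A` by bounded
operators on some complex Hilbert space. -/
def CStarRepresentable : Prop :=
  ∃ (H : Type) (_ : NormedAddCommGroup H) (_ : InnerProductSpace ℂ H) (_ : CompleteSpace H)
    (π : A →⋆ₐ[ℂ] (H →L[ℂ] H)), Function.Injective π

/-- `A` is a bounded `*`-algebra: every `x` satisfies `x x* + x₁x₁* + ⋯ + x_m x_m* = α•1`
for some real `α` and finitely many `xᵢ ∈ A`. -/
def IsBoundedStarAlgebra : Prop :=
  ∀ x : A, ∃ (α : ℝ) (m : ℕ) (f : Fin m → A),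
    x * star x + ∑ i, f i * star (f i) = (α : ℂ) • (1 : A)

/-- `A` is completely positive: `x₁*x₁ + ⋯ + x_n*x_n = 0` only has the zero solution. -/
def CompletelyPositive : Prop :=
  ∀ (n : ℕ), 0 < n → ∀ f : Fin n → A, ∑ i, star (f i) * f i = 0 → ∀ i, f i = 0

/-- `x` belongs to the `*`-radical of `A`: every `*`-representation kills `x`. -/
def MemStarRadical (x : A) : Prop :=
  ∀ (H : Type) (_ : NormedAddCommGroup H) (_ : InnerProductSpace ℂ H) (_ : CompleteSpace H)
    (π : A →⋆ₐ[ℂ] (H →L[ℂ] H)), π x = 0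

end CommonDefs

namespace StarAlgHom

theorem norm_sq_le_of_mul_star_add_sum_eq {A B ι : Type*} [Ring A] [Algebra ℂ A] [StarRing A]
    [CStarAlgebra B] [PartialOrder B] [StarOrderedRing B] [Fintype ι]
    (π : A →⋆ₐ[ℂ] B) {a : A} {f : ι → A} {α : ℝ}
    (h : a * star a + ∑ i, f i * star (f i) = (α : ℂ) • (1 : A)) :
    ‖π a‖ ^ 2 ≤ |α| := by
  have hπ : π a * star (π a) + ∑ i, π (f i) * star (π (f i)) = algebraMap ℝ B α := by
    have hα : π ((α : ℂ) • 1) = algebraMap ℝ B α := by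
      rw [map_smul, map_one, Complex.coe_smul, Algebra.algebraMap_eq_smul_one]
    simpa only [map_add, map_sum, map_mul, map_star, hα] using congr(π $h)
  have hle : π a * star (π a) ≤ algebraMap ℝ B |α| :=
    calc π a * star (π a)
        ≤ π a * star (π a) + ∑ i, π (f i) * star (π (f i)) :=
          le_add_of_nonneg_right (Finset.sum_nonneg fun i _ => mul_star_self_nonneg _)
      _ = algebraMap ℝ B α := hπ
      _ ≤ algebraMap ℝ B |α| := algebraMap_mono B (le_abs_self α)
  rw [sq, ← CStarRing.norm_self_mul_star]
  exact (CStarAlgebra.norm_le_iff_le_algebraMap _ (abs_nonneg α)).2 hle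

variable {A ι : Type*} {E : ι → Type*} [Ring A] [Algebra ℂ A] [StarRing A]
  [∀ i, NormedAddCommGroup (E i)] [∀ i, InnerProductSpace ℂ (E i)] [∀ i, CompleteSpace (E i)]
  (π : ∀ i, A →⋆ₐ[ℂ] (E i →L[ℂ] E i)) (C : A → ℝ) (hC : ∀ a i, ‖π i a‖ ≤ C a)

noncomputable def hilbertSum : A →⋆ₐ[ℂ] (lp E 2 →L[ℂ] lp E 2) where
  toFun a := lp.mapCLM 2 (fun i => π i a) (le_max_right (C a) 0)
    fun i => (hC a i).trans (le_max_left _ _)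
  map_one' := by ext; simp
  map_mul' a b := by ext; simp
  map_zero' := by ext; simp
  map_add' a b := by ext; simp
  commutes' c := by ext; simp [Algebra.algebraMap_eq_smul_one]
  map_star' a := by
    refine ((ContinuousLinearMap.eq_adjoint_iff _ _).2 fun v w => ?_).trans
      (ContinuousLinearMap.star_eq_adjoint _).symm
    simp only [lp.inner_eq_tsum, lp.mapCLM_apply_coe, map_star,
      ContinuousLinearMap.star_eq_adjoint, ContinuousLinearMap.adjoint_inner_left]

@[simp]
theorem hilbertSum_apply_coe (a : A) (v : lp E 2) (i : ι) :
    (hilbertSum π C hC a v : ∀ i, E i) i = π i a (v i) :=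
  rfl

theorem hilbertSum_eq_zero_iff {a : A} : hilbertSum π C hC a = 0 ↔ ∀ i, π i a = 0 := by
  classical
  refine ⟨fun h i => ContinuousLinearMap.ext fun x => ?_, fun h => ?_⟩
  · simpa using congr(($h (lp.single 2 i x) : ∀ i, E i) i)
  · ext; simp [h]

end StarAlgHom

theorem memStarRadical_zero (A : Type) [Ring A] [Algebra ℂ A] [StarRing A] [StarModule ℂ A] :
    MemStarRadical A 0 :=
  fun _ _ _ _ π => map_zero π

theorem exists_starAlgHom_eq_zero_iff_memStarRadical {A : Type} [Ring A] [Algebra ℂ A]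
    [StarRing A] [StarModule ℂ A] (hbdd : IsBoundedStarAlgebra A) :
    ∃ (H : Type) (_ : NormedAddCommGroup H) (_ : InnerProductSpace ℂ H) (_ : CompleteSpace H)
      (π : A →⋆ₐ[ℂ] (H →L[ℂ] H)), ∀ x, π x = 0 ↔ MemStarRadical A x := by
  have hwitness (x : {x : A // ¬ MemStarRadical A x}) :
      ∃ (H : Type) (_ : NormedAddCommGroup H) (_ : InnerProductSpace ℂ H)
        (_ : CompleteSpace H) (π : A →⋆ₐ[ℂ] (H →L[ℂ] H)), π x ≠ 0 := by
    simpa [MemStarRadical] using x.2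
  choose H _ _ _ π hπ using hwitness
  choose α m f hf using hbdd
  have hbound (a : A) (x) : ‖π x a‖ ≤ √|α a| :=
    Real.le_sqrt_of_sq_le ((π x).norm_sq_le_of_mul_star_add_sum_eq (hf a))
  refine ⟨lp H 2, inferInstance, inferInstance, inferInstance,
    StarAlgHom.hilbertSum π _ hbound, fun a => ⟨fun ha => ?_, fun ha => ha _ _ _ _ _⟩⟩
  by_contra hrad
  exact hπ ⟨a, hrad⟩ ((StarAlgHom.hilbertSum_eq_zero_iff π _ hbound).1 ha ⟨a, hrad⟩)

/-- a bounded unital complex `*`-algebra is C*-representable iff its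
`*`-radical is trivial. -/
theorem cstarRepresentable_iff_starRadical_eq_bot
    (A : Type) [Ring A] [Algebra ℂ A] [StarRing A] [StarModule ℂ A]
    (hbdd : IsBoundedStarAlgebra A) :
    CStarRepresentable A ↔ {x : A | MemStarRadical A x} = {0} := by
  constructor
  · rintro ⟨H, _, _, _, π, hπ⟩
    refine Set.eq_singleton_iff_unique_mem.2 ⟨memStarRadical_zero A, fun x hx => hπ ?_⟩
    rw [hx H _ _ _ π, map_zero]
  · intro hrad
    obtain ⟨H, _, _, _, π, hπ⟩ := exists_starAlgHom_eq_zero_iff_memStarRadical hbdd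
    refine ⟨H, _, _, _, π, (injective_iff_map_eq_zero π).2 fun x hx => ?_⟩
    exact (Set.ext_iff.1 hrad x).1 ((hπ x).1 hx)
end

section
/- Let A be a bounded unital complex *-algebra and a ∈ A with a* = a. Then π(a) is a positive operator for every *-representation π of A on a complex Hilbert space if and only if for every real ε > 0 there exist x₁,…,x_n ∈ A with a + ε•1 = x₁x₁* + ⋯ + x_nx_n*. -/
/-!
If `a + ε` is not a sum of hermitian squares, the M. Riesz extension theorem separates it from
the cone of such sums by a real functional `g` with `g 1 = 1`; boundedness of `A` makes `1` an
order unit, which is what the extension theorem needs. Complexified, `g` is a positive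
functional, and its GNS representation `π` has a vector `Ω` with `⟪Ω, π(a) Ω⟫ = g a ≤ -ε`, so
`π(a)` is not positive; boundedness is again what makes left multiplication bounded. Conversely,
`π(a) + ε` is a sum of operators `T T*`, and the positive operators form a closed cone.
-/

open scoped ComplexConjugate InnerProductSpace

section SumSqCone

variable {A : Type*} [Ring A] [StarRing A]

variable (A) in
def sumSqCone : AddSubmonoid A :=
  AddSubmonoid.closure {x | ∃ y, x = y * star y}

lemma mul_star_self_mem_sumSqCone (y : A) : y * star y ∈ sumSqCone A :=
  AddSubmonoid.subset_closure ⟨y, rfl⟩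

lemma one_mem_sumSqCone : (1 : A) ∈ sumSqCone A := by
  simpa using mul_star_self_mem_sumSqCone (1 : A)

lemma star_mul_self_mem_sumSqCone (y : A) : star y * y ∈ sumSqCone A := by
  simpa using mul_star_self_mem_sumSqCone (star y)

lemma mem_sumSqCone_iff {x : A} :
    x ∈ sumSqCone A ↔ ∃ (n : ℕ) (f : Fin n → A), x = ∑ i, f i * star (f i) := by
  refine ⟨fun hx => ?_, fun ⟨n, f, hx⟩ => hx ▸ sum_mem fun i _ => mul_star_self_mem_sumSqCone _⟩
  induction hx using AddSubmonoid.closure_induction with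
  | mem x h => obtain ⟨y, rfl⟩ := h; exact ⟨1, fun _ => y, by simp⟩
  | zero => exact ⟨0, Fin.elim0, by simp⟩
  | add x y _ _ hx hy =>
    obtain ⟨n, f, rfl⟩ := hx
    obtain ⟨m, g, rfl⟩ := hy
    exact ⟨n + m, Fin.append f g, by simp [Fin.sum_univ_add]⟩

lemma IsSelfAdjoint.of_mem_sumSqCone {x : A} (hx : x ∈ sumSqCone A) : IsSelfAdjoint x := by
  induction hx using AddSubmonoid.closure_induction with
  | mem x h => obtain ⟨y, rfl⟩ := h; exact IsSelfAdjoint.mul_star_self y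
  | zero => exact .zero _
  | add x y _ _ hx hy => exact hx.add hy

lemma star_mul_mul_mem_sumSqCone {x : A} (hx : x ∈ sumSqCone A) (v : A) :
    star v * x * v ∈ sumSqCone A := by
  induction hx using AddSubmonoid.closure_induction with
  | mem x h =>
    obtain ⟨y, rfl⟩ := h
    simpa [mul_assoc] using mul_star_self_mem_sumSqCone (star v * y)
  | zero => simp [zero_mem]
  | add x y _ _ hx hy => simpa [mul_add, add_mul] using add_mem hx hy

end SumSqCone

section StarAlgebra

variable {A : Type*} [Ring A] [Algebra ℂ A] [StarRing A] [StarModule ℂ A]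

lemma smul_mem_sumSqCone {r : ℝ} (hr : 0 ≤ r) {x : A} (hx : x ∈ sumSqCone A) :
    r • x ∈ sumSqCone A := by
  induction hx using AddSubmonoid.closure_induction with
  | mem x h =>
    obtain ⟨y, rfl⟩ := h
    have : r • (y * star y) = (√r • y) * star (√r • y) := by
      rw [star_smul, star_trivial (√r), smul_mul_smul_comm, Real.mul_self_sqrt hr]
    exact this ▸ mul_star_self_mem_sumSqCone _
  | zero => simp [zero_mem]
  | add x y _ _ hx hy => rw [smul_add]; exact add_mem hx hy

lemma IsSelfAdjoint.exists_eq_mul_star_sub_mul_star {v : A} (hv : IsSelfAdjoint v) :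
    ∃ u w : A, v = u * star u - w * star w := by
  refine ⟨(1 / 2 : ℂ) • (1 + v), (1 / 2 : ℂ) • (1 - v), ?_⟩
  have h2 : star (1 / 2 : ℂ) = 1 / 2 := by simp
  simp only [star_smul, star_add, star_sub, star_one, hv.star_eq, h2, smul_mul_smul_comm,
    mul_add, add_mul, mul_sub, sub_mul, one_mul, mul_one]
  module

lemma mem_sumSqCone_of_neg_smul_one_mem {c : ℝ} (hc : 0 < c)
    (h : -(c • (1 : A)) ∈ sumSqCone A) {v : A} (hv : IsSelfAdjoint v) : v ∈ sumSqCone A := by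
  have neg_mem : ∀ z : A, -(z * star z) ∈ sumSqCone A := fun z => by
    have := smul_mem_sumSqCone (inv_nonneg.2 hc.le) (star_mul_mul_mem_sumSqCone h (star z))
    convert this using 1
    simp [smul_smul, hc.ne']
  obtain ⟨u, w, rfl⟩ := hv.exists_eq_mul_star_sub_mul_star
  rw [sub_eq_add_neg]
  exact add_mem (mul_star_self_mem_sumSqCone u) (neg_mem w)

variable (b : A)

-- Only the real part `x + star x` is constrained, so skew-adjoint elements lie in the cone and
-- `ℝ • 1 + separationCone b = A`, as the M. Riesz extension theorem requires.
def separationCone : PointedCone ℝ A where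
  carrier := {x | ∃ q ∈ sumSqCone A, ∃ r : ℝ, 0 ≤ r ∧ x + star x = q - r • b}
  zero_mem' := ⟨0, zero_mem _, 0, le_rfl, by simp⟩
  add_mem' := by
    rintro x y ⟨q, hq, r, hr, hx⟩ ⟨q', hq', r', hr', hy⟩
    refine ⟨q + q', add_mem hq hq', r + r', add_nonneg hr hr', ?_⟩
    rw [star_add, add_smul]
    linear_combination (norm := abel) hx + hy
  smul_mem' := by
    rintro ⟨c, hc⟩ x ⟨q, hq, r, hr, hx⟩
    refine ⟨c • q, smul_mem_sumSqCone hc hq, c * r, mul_nonneg hc hr, ?_⟩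
    simp only [Nonneg.mk_smul, star_smul, star_trivial, ← smul_add, hx, smul_sub, smul_smul]

variable {b}

lemma mem_separationCone_of_star_add_self_eq_zero {x : A} (hx : x + star x = 0) :
    x ∈ separationCone b :=
  ⟨0, zero_mem _, 0, le_rfl, by simp [hx]⟩

lemma nonneg_of_smul_one_mem_separationCone (hb : IsSelfAdjoint b) (hnot : b ∉ sumSqCone A)
    {t : ℝ} (ht : t • (1 : A) ∈ separationCone b) : 0 ≤ t := by
  obtain ⟨q, hq, r, hr, h⟩ := ht
  by_contra! ht
  rw [star_smul, star_one, star_trivial, ← two_smul ℝ, smul_smul] at h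
  obtain rfl | hr := hr.eq_or_lt
  · refine hnot (mem_sumSqCone_of_neg_smul_one_mem (c := -(2 * t)) (by linarith) ?_ hb)
    have hq' : q = (2 * t) • (1 : A) := by simpa using h.symm
    simpa [neg_smul, ← hq'] using hq
  · have hrb : r • b = q + (-(2 * t)) • (1 : A) := by rw [neg_smul, h]; abel
    have : r • b ∈ sumSqCone A :=
      hrb ▸ add_mem hq (smul_mem_sumSqCone (by linarith) one_mem_sumSqCone)
    exact hnot (by simpa [smul_smul, hr.ne'] using smul_mem_sumSqCone (inv_nonneg.2 hr.le) this)

end StarAlgebra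

section BoundedStarAlgebra

variable {A : Type} [Ring A] [Algebra ℂ A] [StarRing A] [StarModule ℂ A] {b : A}

lemma exists_smul_one_sub_mem_sumSqCone (hbdd : IsBoundedStarAlgebra A) {v : A}
    (hv : IsSelfAdjoint v) : ∃ c : ℝ, c • (1 : A) - v ∈ sumSqCone A := by
  obtain ⟨u, w, rfl⟩ := hv.exists_eq_mul_star_sub_mul_star
  obtain ⟨α, m, f, hf⟩ := hbdd u
  refine ⟨α, ?_⟩
  have : α • (1 : A) - (u * star u - w * star w) = ∑ i, f i * star (f i) + w * star w := by
    rw [← Complex.coe_smul, ← hf]; abel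
  rw [this]
  exact add_mem (mem_sumSqCone_iff.2 ⟨m, f, rfl⟩) (mul_star_self_mem_sumSqCone w)

lemma exists_smul_one_sub_star_mul_self_mem_sumSqCone (hbdd : IsBoundedStarAlgebra A) (x : A) :
    ∃ c : ℝ, c • (1 : A) - star x * x ∈ sumSqCone A :=
  exists_smul_one_sub_mem_sumSqCone hbdd (.star_mul_self x)

lemma exists_smul_one_add_mem_separationCone (hbdd : IsBoundedStarAlgebra A) (y : A) :
    ∃ t : ℝ, t • (1 : A) + y ∈ separationCone b := by
  obtain ⟨c, hc⟩ := exists_smul_one_sub_mem_sumSqCone hbdd (v := -(y + star y))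
    (by simp [IsSelfAdjoint, add_comm])
  refine ⟨c / 2, _, hc, 0, le_rfl, ?_⟩
  rw [star_add, star_smul, star_one, star_trivial, zero_smul, sub_zero, sub_neg_eq_add]
  module

lemma exists_separating_functional (hbdd : IsBoundedStarAlgebra A) (hb : IsSelfAdjoint b)
    (hnot : b ∉ sumSqCone A) :
    ∃ g : A →ₗ[ℝ] ℝ, (∀ q ∈ sumSqCone A, 0 ≤ g q) ∧ (∀ x, g (star x) = g x) ∧
      g 1 = 1 ∧ g b ≤ 0 := by
  have hone : (1 : A) ≠ 0 := fun h => hnot <| by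
    rw [← mul_one b, h, mul_zero]; exact zero_mem _
  let f : A →ₗ.[ℝ] ℝ := ⟨ℝ ∙ (1 : A), LinearEquiv.coord ℝ A 1 hone⟩
  have one_mem_domain : (1 : A) ∈ f.domain := Submodule.mem_span_singleton_self 1
  obtain ⟨g, hgf, hg⟩ := riesz_extension (separationCone b) f
    (fun x hx => nonneg_of_smul_one_mem_separationCone hb hnot <| by
      rwa [show f x • (1 : A) = x from LinearEquiv.coord_apply_smul _ _ _ _ _])
    (fun y => have ⟨t, ht⟩ := exists_smul_one_add_mem_separationCone hbdd y
      ⟨⟨t • 1, Submodule.smul_mem _ t one_mem_domain⟩, ht⟩)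
  have hg_skew {x : A} (hx : x + star x = 0) : g x = 0 := by
    have hneg : -x + star (-x) = 0 := by rw [star_neg, ← neg_add, hx, neg_zero]
    have := hg _ (mem_separationCone_of_star_add_self_eq_zero hneg)
    linarith [hg x (mem_separationCone_of_star_add_self_eq_zero hx), g.map_neg x]
  refine ⟨g, fun q hq => hg q ⟨q + q, add_mem hq hq, 0, le_rfl, ?_⟩, fun x => ?_, ?_, ?_⟩
  · rw [(IsSelfAdjoint.of_mem_sumSqCone hq).star_eq, zero_smul, sub_zero]
  · have := hg_skew (x := star x - x) (by rw [star_sub, star_star]; abel)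
    rwa [map_sub, sub_eq_zero] at this
  · exact (hgf ⟨1, one_mem_domain⟩).trans (LinearEquiv.coord_self ℝ A 1 hone)
  · have := hg (-b) ⟨0, zero_mem _, 2, zero_le_two, by rw [star_neg, hb.star_eq]; module⟩
    linarith [g.map_neg b]

end BoundedStarAlgebra

section ExtendRCLike

variable {E : Type*} [AddCommGroup E] [Module ℂ E] (g : E →ₗ[ℝ] ℝ) (x : E)

lemma Module.Dual.re_extendRCLike_apply_complex :
    (Module.Dual.extendRCLike (𝕜 := ℂ) g x).re = g x :=
  Module.Dual.re_extendRCLike_apply (𝕜 := ℂ) g x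

lemma Module.Dual.im_extendRCLike_apply_complex :
    (Module.Dual.extendRCLike (𝕜 := ℂ) g x).im = -g (Complex.I • x) :=
  Module.Dual.im_extendRCLike_apply (𝕜 := ℂ) g x

end ExtendRCLike

structure PositiveStarFunctional (A : Type*) [Ring A] [Module ℂ A] [StarRing A] where
  toLinearMap : A →ₗ[ℂ] ℂ
  map_star : ∀ x, toLinearMap (star x) = conj (toLinearMap x)
  re_nonneg : ∀ q ∈ sumSqCone A, 0 ≤ (toLinearMap q).re

namespace PositiveStarFunctional

variable {A : Type*} [Ring A] [Algebra ℂ A] [StarRing A] [StarModule ℂ A]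

instance : CoeFun (PositiveStarFunctional A) (fun _ => A → ℂ) := ⟨fun φ => φ.toLinearMap⟩

section OfReal

variable (g : A →ₗ[ℝ] ℝ)

noncomputable def ofReal (hg_nonneg : ∀ q ∈ sumSqCone A, 0 ≤ g q)
    (hg_star : ∀ x, g (star x) = g x) : PositiveStarFunctional A where
  toLinearMap := Module.Dual.extendRCLike g
  map_star x := by
    have : Complex.I • star x = -star (Complex.I • x) := by simp [star_smul]
    apply Complex.ext
    · simp only [Complex.conj_re, Module.Dual.re_extendRCLike_apply_complex, hg_star]
    · simp only [Complex.conj_im, Module.Dual.im_extendRCLike_apply_complex, this, map_neg,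
        hg_star]
  re_nonneg q hq := (Module.Dual.re_extendRCLike_apply_complex g q).symm ▸ hg_nonneg q hq

lemma re_ofReal_apply (hg_nonneg : ∀ q ∈ sumSqCone A, 0 ≤ g q)
    (hg_star : ∀ x, g (star x) = g x) (x : A) : (ofReal g hg_nonneg hg_star x).re = g x :=
  Module.Dual.re_extendRCLike_apply_complex g x

end OfReal

variable (φ : PositiveStarFunctional A)

def PreGNS (_φ : PositiveStarFunctional A) : Type _ := A

instance : AddCommGroup φ.PreGNS := inferInstanceAs (AddCommGroup A)
instance : Module ℂ φ.PreGNS := inferInstanceAs (Module ℂ A)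

def toPreGNS : A ≃ₗ[ℂ] φ.PreGNS := LinearEquiv.refl ℂ A

noncomputable abbrev preGNSCore : PreInnerProductSpace.Core ℂ φ.PreGNS where
  inner x y := φ (star (φ.toPreGNS.symm x) * φ.toPreGNS.symm y)
  conj_inner_symm x y := by rw [← φ.map_star, star_mul, star_star]
  re_inner_nonneg x := φ.re_nonneg _ (star_mul_self_mem_sumSqCone _)
  add_left x y z := by simp only [map_add, star_add, add_mul]
  smul_left x y r := by simp [star_smul]

noncomputable instance : SeminormedAddCommGroup φ.PreGNS :=
  InnerProductSpace.Core.toSeminormedAddCommGroup (c := φ.preGNSCore)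

noncomputable instance : InnerProductSpace ℂ φ.PreGNS :=
  InnerProductSpace.ofCore φ.preGNSCore

lemma inner_toPreGNS (x y : A) : ⟪φ.toPreGNS x, φ.toPreGNS y⟫_ℂ = φ (star x * y) := rfl

lemma norm_toPreGNS_sq (x : A) : ‖φ.toPreGNS x‖ ^ 2 = (φ (star x * x)).re := by
  rw [norm_sq_eq_re_inner (𝕜 := ℂ), inner_toPreGNS]; rfl

lemma norm_toPreGNS_mul_sq_le {b : A} {c : ℝ} (hc : c • (1 : A) - star b * b ∈ sumSqCone A)
    (x : A) : ‖φ.toPreGNS (b * x)‖ ^ 2 ≤ c * ‖φ.toPreGNS x‖ ^ 2 := by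
  have hsplit :
      star (b * x) * (b * x) = c • (star x * x) - star x * (c • 1 - star b * b) * x := by
    simp only [star_mul, mul_sub, sub_mul, mul_smul_comm, smul_mul_assoc, mul_one, mul_assoc]
    abel
  have := φ.re_nonneg _ (star_mul_mul_mem_sumSqCone hc x)
  rw [norm_toPreGNS_sq, norm_toPreGNS_sq, hsplit, map_sub, ← Complex.coe_smul, map_smul]
  simp only [Complex.sub_re, smul_eq_mul, Complex.re_ofReal_mul]
  linarith

abbrev GNS := UniformSpace.Completion φ.PreGNS

lemma gns_ext {S T : φ.GNS →L[ℂ] φ.GNS}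
    (h : ∀ x : A, S (φ.toPreGNS x : φ.GNS) = T (φ.toPreGNS x : φ.GNS)) : S = T :=
  ContinuousLinearMap.ext fun v => UniformSpace.Completion.induction_on v
    (isClosed_eq S.continuous T.continuous) fun w => h (φ.toPreGNS.symm w)

end PositiveStarFunctional

namespace PositiveStarFunctional

variable {A : Type} [Ring A] [Algebra ℂ A] [StarRing A] [StarModule ℂ A]
  (φ : PositiveStarFunctional A) (hbdd : IsBoundedStarAlgebra A)

noncomputable def mulLeftPreGNS (b : A) : φ.PreGNS →L[ℂ] φ.PreGNS :=
  (φ.toPreGNS.toLinearMap ∘ₗ LinearMap.mulLeft ℂ b ∘ₗ φ.toPreGNS.symm.toLinearMap)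
    |>.mkContinuousOfExistsBound <| by
    obtain ⟨c, hc⟩ := exists_smul_one_sub_star_mul_self_mem_sumSqCone hbdd b
    refine ⟨√|c|, fun x => ?_⟩
    rw [← Real.sqrt_sq (norm_nonneg x), ← Real.sqrt_mul (abs_nonneg c),
      Real.le_sqrt (norm_nonneg _) (by positivity)]
    exact (φ.norm_toPreGNS_mul_sq_le hc _).trans
      (mul_le_mul_of_nonneg_right (le_abs_self c) (sq_nonneg _))

lemma mulLeftPreGNS_toPreGNS (b x : A) :
    φ.mulLeftPreGNS hbdd b (φ.toPreGNS x) = φ.toPreGNS (b * x) :=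
  rfl

noncomputable def gnsRep : A →⋆ₐ[ℂ] (φ.GNS →L[ℂ] φ.GNS) where
  toFun b := (φ.mulLeftPreGNS hbdd b).completion
  map_one' := φ.gns_ext fun x => by simp [mulLeftPreGNS_toPreGNS]
  map_mul' b c := φ.gns_ext fun x => by simp [mulLeftPreGNS_toPreGNS, mul_assoc]
  map_zero' := φ.gns_ext fun x => by
    simp [mulLeftPreGNS_toPreGNS, UniformSpace.Completion.coe_zero]
  map_add' b c := φ.gns_ext fun x => by
    simp [mulLeftPreGNS_toPreGNS, add_mul, UniformSpace.Completion.coe_add]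
  commutes' r := φ.gns_ext fun x => by
    simp [mulLeftPreGNS_toPreGNS, Algebra.algebraMap_eq_smul_one]
  map_star' b := by
    refine (ContinuousLinearMap.eq_adjoint_iff _ _).2 fun u v => ?_
    induction u, v using UniformSpace.Completion.induction_on₂ with
    | hp => exact isClosed_eq (by fun_prop) (by fun_prop)
    | ih u v =>
      obtain ⟨u, rfl⟩ := φ.toPreGNS.surjective u
      obtain ⟨v, rfl⟩ := φ.toPreGNS.surjective v
      simp only [ContinuousLinearMap.completion_apply_coe, mulLeftPreGNS_toPreGNS,
        UniformSpace.Completion.inner_coe, inner_toPreGNS, star_mul, star_star, mul_assoc]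

lemma gnsRep_apply_toPreGNS (b x : A) :
    φ.gnsRep hbdd b (φ.toPreGNS x) = φ.toPreGNS (b * x) :=
  ContinuousLinearMap.completion_apply_coe _ _

lemma inner_toPreGNS_one_gnsRep (x : A) :
    ⟪(φ.toPreGNS 1 : φ.GNS), φ.gnsRep hbdd x (φ.toPreGNS 1)⟫_ℂ = φ x := by
  rw [gnsRep_apply_toPreGNS, UniformSpace.Completion.inner_coe, inner_toPreGNS, star_one,
    one_mul, mul_one]

end PositiveStarFunctional

open Filter Topology in
lemma ContinuousLinearMap.isPositive_of_forall_isPositive_add_smul_one {H : Type*}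
    [NormedAddCommGroup H] [InnerProductSpace ℂ H] [CompleteSpace H] {T : H →L[ℂ] H}
    (h : ∀ ε : ℝ, 0 < ε → (T + (ε : ℂ) • 1).IsPositive) : T.IsPositive := by
  rw [← nonneg_iff_isPositive]
  have hlim : Tendsto (fun ε : ℝ => T + (ε : ℂ) • (1 : H →L[ℂ] H)) (𝓝[>] 0) (𝓝 T) := by
    have hcont : Continuous fun ε : ℝ => T + (ε : ℂ) • (1 : H →L[ℂ] H) := by fun_prop
    simpa using (hcont.tendsto 0).mono_left nhdsWithin_le_nhds
  exact ge_of_tendsto hlim <| eventually_nhdsWithin_of_forall fun ε hε =>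
    (nonneg_iff_isPositive _).2 (h ε hε)

lemma StarAlgHom.isPositive_map_of_mem_sumSqCone {A H : Type*} [Ring A] [Algebra ℂ A]
    [StarRing A] [NormedAddCommGroup H] [InnerProductSpace ℂ H] [CompleteSpace H]
    (π : A →⋆ₐ[ℂ] (H →L[ℂ] H)) {q : A} (hq : q ∈ sumSqCone A) : (π q).IsPositive := by
  induction hq using AddSubmonoid.closure_induction with
  | mem x h =>
    obtain ⟨y, rfl⟩ := h
    rw [map_mul, map_star, ContinuousLinearMap.star_eq_adjoint]
    exact ContinuousLinearMap.isPositive_self_comp_adjoint _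
  | zero => simp
  | add x y _ _ hx hy => rw [map_add]; exact hx.add hy

/-- in a bounded unital complex `*`-algebra, a self-adjoint `a` is positive in every
`*`-representation iff `a + ε•1` is a sum of elements `xᵢxᵢ*` for every real `ε > 0`. -/
theorem starRep_positive_iff_approx_sum_squares
    (A : Type) [Ring A] [Algebra ℂ A] [StarRing A] [StarModule ℂ A]
    (hbdd : IsBoundedStarAlgebra A) (a : A) (ha : star a = a) :
    (∀ (H : Type) (_ : NormedAddCommGroup H) (_ : InnerProductSpace ℂ H) (_ : CompleteSpace H)
        (π : A →⋆ₐ[ℂ] (H →L[ℂ] H)), (π a).IsPositive) ↔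
      ∀ ε : ℝ, 0 < ε → ∃ (n : ℕ) (f : Fin n → A),
        a + (ε : ℂ) • (1 : A) = ∑ i, f i * star (f i) := by
  constructor
  · intro hpos ε hε
    rw [← mem_sumSqCone_iff]
    by_contra hnot
    have hb : IsSelfAdjoint (a + (ε : ℂ) • (1 : A)) := by simp [IsSelfAdjoint, star_smul, ha]
    obtain ⟨g, hg_nonneg, hg_star, hg_one, hg_b⟩ := exists_separating_functional hbdd hb hnot
    let φ := PositiveStarFunctional.ofReal g hg_nonneg hg_star
    have h_state := (hpos _ _ _ _ (φ.gnsRep hbdd)).re_inner_nonneg_right (φ.toPreGNS 1)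
    rw [φ.inner_toPreGNS_one_gnsRep, RCLike.re_to_complex,
      PositiveStarFunctional.re_ofReal_apply] at h_state
    rw [map_add, Complex.coe_smul, map_smul, hg_one, smul_eq_mul, mul_one] at hg_b
    linarith
  · intro h H _ _ _ π
    refine ContinuousLinearMap.isPositive_of_forall_isPositive_add_smul_one fun ε hε => ?_
    obtain ⟨n, f, hf⟩ := h ε hε
    have := π.isPositive_map_of_mem_sumSqCone (mem_sumSqCone_iff.2 ⟨n, f, hf⟩)
    rwa [map_add, map_smul, map_one] at this
end

section
/- Let A be a complex *-algebra, let q be a real number with 0 < q < 1, and let a ∈ A satisfy a*a = q•(aa*). Then π(a) = 0 for every *-representation π of A on a complex Hilbert space. -/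
theorem CStarRing.eq_zero_of_star_mul_self_eq_smul_mul_star {𝕜 E : Type*} [NormedField 𝕜]
    [NonUnitalNormedRing E] [StarRing E] [CStarRing E] [Module 𝕜 E] [NormSMulClass 𝕜 E]
    {c : 𝕜} (hc : ‖c‖ < 1) {x : E} (hx : star x * x = c • (x * star x)) : x = 0 := by
  have hsq : ‖x‖ * ‖x‖ = ‖c‖ * (‖x‖ * ‖x‖) := by
    calc ‖x‖ * ‖x‖ = ‖star x * x‖ := CStarRing.norm_star_mul_self.symm
      _ = ‖c • (x * star x)‖ := by rw [hx]
      _ = ‖c‖ * (‖x‖ * ‖x‖) := by rw [norm_smul, CStarRing.norm_self_mul_star]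
  have hsq0 : ‖x‖ * ‖x‖ = 0 := by nlinarith [mul_self_nonneg ‖x‖]
  exact norm_eq_zero.mp (mul_self_eq_zero.mp hsq0)

theorem starRep_eq_zero_of_qCommutation_general
    (A : Type) [Ring A] [Algebra ℂ A] [StarRing A]
    (q : ℝ) (hq0 : 0 < q) (hq1 : q < 1) (a : A)
    (ha : star a * a = (q : ℂ) • (a * star a)) :
    ∀ (H : Type) (_ : NormedAddCommGroup H) (_ : InnerProductSpace ℂ H) (_ : CompleteSpace H)
      (π : A →⋆ₐ[ℂ] (H →L[ℂ] H)), π a = 0 := by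
  intro H _ _ _ π
  have hq : ‖(q : ℂ)‖ < 1 := by rwa [Complex.norm_real, Real.norm_of_nonneg hq0.le]
  refine CStarRing.eq_zero_of_star_mul_self_eq_smul_mul_star hq ?_
  simpa only [map_smul, map_mul, map_star] using congrArg π ha

/-- if `a* a = q • (a a*)` with `0 < q < 1` in a complex `*`-algebra, then
`π(a) = 0` in every `*`-representation. -/
theorem starRep_eq_zero_of_qCommutation
    (A : Type) [Ring A] [Algebra ℂ A] [StarRing A] [StarModule ℂ A]
    (q : ℝ) (hq0 : 0 < q) (hq1 : q < 1) (a : A)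
    (ha : star a * a = (q : ℂ) • (a * star a)) :
    ∀ (H : Type) (_ : NormedAddCommGroup H) (_ : InnerProductSpace ℂ H) (_ : CompleteSpace H)
      (π : A →⋆ₐ[ℂ] (H →L[ℂ] H)), π a = 0 :=
  starRep_eq_zero_of_qCommutation_general A q hq0 hq1 a ha
end
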